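/- arXiv:1310.5901 — 2 statements merged into one kernel-verified Lean document; each statement's English description precedes it below -/
import Mathlib

section
/- If β_σ β_τ = β_{στ}², β_σ > 0, β_τ > 0, β_{στ} > 0, then the trial pressure A(m_σ, m_τ) of the fully interacting bipartite ferromagnet depends on (m_σ, m_τ) only through the linear combination ε = √β_σ α m_σ + √β_τ (1-α) m_τ; explicitly A(m_σ, m_τ) = ln 2 + α ln cosh(√β_σ ε) + (1-α) ln cosh(√β_τ ε) - ε²/2. -/
/-- Trial pressure of the fully interacting bipartite ferromagnet. -/
noncomputable def Atrial (α βσ βτ βστ mσ mτ : ℝ) : ℝ :=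
  Real.log 2 + α * Real.log (Real.cosh (βσ * α * mσ + βστ * (1 - α) * mτ))
    + (1 - α) * Real.log (Real.cosh (βστ * α * mσ + βτ * (1 - α) * mτ))
    - (βστ * α * (1 - α) * mσ * mτ + (βσ / 2) * α ^ 2 * mσ ^ 2
        + (βτ / 2) * (1 - α) ^ 2 * mτ ^ 2)

/-- On the critical surface `βσ βτ = βστ²` (positive couplings), the trial pressure
depends only on `ε = √βσ α mσ + √βτ (1-α) mτ`. -/
theorem ferro_critical_surface_reduction (α βσ βτ βστ : ℝ)
    (hα : α ∈ Set.Ioo (0:ℝ) 1) (hσ : 0 < βσ) (hτ : 0 < βτ) (hστ : 0 < βστ)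
    (hcrit : βσ * βτ = βστ ^ 2) (mσ mτ ε : ℝ)
    (hε : ε = Real.sqrt βσ * α * mσ + Real.sqrt βτ * (1 - α) * mτ) :
    Atrial α βσ βτ βστ mσ mτ =
      Real.log 2 + α * Real.log (Real.cosh (Real.sqrt βσ * ε))
        + (1 - α) * Real.log (Real.cosh (Real.sqrt βτ * ε)) - ε ^ 2 / 2 := by
  have hsσ : Real.sqrt βσ * Real.sqrt βσ = βσ := Real.mul_self_sqrt hσ.le
  have hsτ : Real.sqrt βτ * Real.sqrt βτ = βτ := Real.mul_self_sqrt hτ.le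
  have hβστ : βστ = Real.sqrt βσ * Real.sqrt βτ := by
    have h1 : Real.sqrt (βσ * βτ) = Real.sqrt βσ * Real.sqrt βτ :=
      Real.sqrt_mul hσ.le _
    have h2 : Real.sqrt (βστ ^ 2) = βστ := Real.sqrt_sq hστ.le
    rw [← h2, ← hcrit, h1]
  have e1 : βσ * α * mσ + βστ * (1 - α) * mτ = Real.sqrt βσ * ε := by
    rw [hε, hβστ]; linear_combination (-(α*mσ)) * hsσ
  have e2 : βστ * α * mσ + βτ * (1 - α) * mτ = Real.sqrt βτ * ε := by
    rw [hε, hβστ]; linear_combination (-((1-α)*mτ)) * hsτ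
  have e3 : βστ * α * (1 - α) * mσ * mτ + (βσ / 2) * α ^ 2 * mσ ^ 2
        + (βτ / 2) * (1 - α) ^ 2 * mτ ^ 2 = ε ^ 2 / 2 := by
    rw [hε, hβστ]; linear_combination (-(α^2*mσ^2/2)) * hsσ + (-((1-α)^2*mτ^2/2)) * hsτ
  rw [Atrial, e1, e2, e3]
end

section
/- The function q ↦ ∫ tanh²(z√(β² q)) dμ(z) on [0,1] (with μ standard Gaussian, β ∈ ℝ) is continuous, nondecreasing, maps [0,1] into [0,1), equals 0 at q=0, and is differentiable on (0,1] with derivative at 0⁺ equal to β² (i.e. lim_{q→0⁺} q^{-1} ∫ tanh²(z√(β² q)) dμ(z) = β²). -/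
/-!
With `√(β² q) = |β| √q`, every property is inherited pointwise in `z` from `tanh`: it is odd,
`1`-Lipschitz with `tanh' = 1 - tanh² ∈ (0, 1]`, so `tanh²` is increasing in `|x|`, `< 1`, and
`tanh² x ≤ x²`. The last bound dominates both the difference quotients of the integrand (by
`β² z²`) and the ratios `tanh²(b √q) / q` (by `b²`), which tend to `b²` because `tanh' 0 = 1`.
Dominated convergence then gives differentiability and `f q / q → β² ∫ z² dμ = β²`.
-/

open MeasureTheory ProbabilityTheory Filter Topology Set

namespace Real

theorem hasDerivAt_tanh (x : ℝ) : HasDerivAt tanh (1 - tanh x ^ 2) x := by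
  rw [show tanh = fun y => sinh y / cosh y from funext tanh_eq_sinh_div_cosh]
  refine ((hasDerivAt_sinh x).div (hasDerivAt_cosh x) (cosh_pos x).ne').congr_deriv ?_
  field_simp

@[fun_prop]
theorem differentiable_tanh : Differentiable ℝ tanh := fun x => (hasDerivAt_tanh x).differentiableAt

@[fun_prop]
theorem continuous_tanh : Continuous tanh := differentiable_tanh.continuous

theorem strictMono_tanh : StrictMono tanh :=
  strictMono_of_deriv_pos fun x => by
    rw [(hasDerivAt_tanh x).deriv, sub_pos]
    exact tanh_sq_lt_one x

theorem lipschitzWith_one_tanh : LipschitzWith 1 tanh :=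
  lipschitzWith_of_nnnorm_deriv_le differentiable_tanh fun x => by
    rw [(hasDerivAt_tanh x).deriv, ← NNReal.coe_le_coe, coe_nnnorm,
      norm_of_nonneg (sub_nonneg.2 (tanh_sq_lt_one x).le)]
    simp [sq_nonneg]

theorem norm_tanh_sq_le_one (x : ℝ) : ‖tanh x ^ 2‖ ≤ 1 := by
  rw [norm_of_nonneg (sq_nonneg _)]
  exact (tanh_sq_lt_one x).le

theorem abs_tanh_le_abs (x : ℝ) : |tanh x| ≤ |x| := by
  simpa [tanh_zero, dist_eq] using lipschitzWith_one_tanh.dist_le_mul x 0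

theorem tanh_sq_le_sq (x : ℝ) : tanh x ^ 2 ≤ x ^ 2 :=
  sq_le_sq.2 (abs_tanh_le_abs x)

theorem tanh_sq_abs (x : ℝ) : tanh |x| ^ 2 = tanh x ^ 2 := by
  rcases abs_choice x with h | h <;> simp [h, tanh_neg]

theorem tanh_sq_le_tanh_sq {x y : ℝ} (h : |x| ≤ |y|) : tanh x ^ 2 ≤ tanh y ^ 2 := by
  rw [← tanh_sq_abs x, ← tanh_sq_abs y]
  have h0 : 0 ≤ tanh |x| := by simpa [tanh_zero] using strictMono_tanh.monotone (abs_nonneg x)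
  exact pow_le_pow_left₀ h0 (strictMono_tanh.monotone h) 2

theorem hasDerivAt_tanh_mul_sqrt_sq (b : ℝ) {q : ℝ} (hq : 0 < q) :
    HasDerivAt (fun q => tanh (b * √q) ^ 2)
      (2 * tanh (b * √q) * (1 - tanh (b * √q) ^ 2) * (b / (2 * √q))) q := by
  refine (((hasDerivAt_tanh (b * √q)).comp q ((hasDerivAt_sqrt hq.ne').const_mul b)).pow 2
    ).congr_deriv ?_
  simp only [Function.comp_apply]
  ring

theorem abs_deriv_tanh_mul_sqrt_sq_le (b : ℝ) {q : ℝ} (hq : 0 < q) :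
    |2 * tanh (b * √q) * (1 - tanh (b * √q) ^ 2) * (b / (2 * √q))| ≤ b ^ 2 := by
  set s := √q
  have hs : 0 < s := sqrt_pos.2 hq
  set t := tanh (b * s)
  have ht : |t| ≤ |b| * s := by simpa [abs_mul, abs_of_pos hs] using abs_tanh_le_abs (b * s)
  have h1 : 0 ≤ 1 - t ^ 2 := sub_nonneg.2 (tanh_sq_lt_one _).le
  have h1' : 1 - t ^ 2 ≤ 1 := by nlinarith [sq_nonneg t]
  rw [abs_mul, abs_mul, abs_mul, abs_of_nonneg h1, abs_div, abs_of_pos (by positivity : 0 < 2 * s),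
    abs_two]
  calc 2 * |t| * (1 - t ^ 2) * (|b| / (2 * s)) ≤ 2 * (|b| * s) * 1 * (|b| / (2 * s)) := by
        gcongr
    _ = b ^ 2 := by
        field_simp
        rw [sq_abs]

theorem tanh_mul_sqrt_sq_div_le (b : ℝ) {q : ℝ} (hq : 0 < q) : tanh (b * √q) ^ 2 / q ≤ b ^ 2 := by
  rw [div_le_iff₀ hq]
  calc tanh (b * √q) ^ 2 ≤ (b * √q) ^ 2 := tanh_sq_le_sq _
    _ = b ^ 2 * q := by rw [mul_pow, sq_sqrt hq.le]

theorem tendsto_tanh_mul_sqrt_sq_div (b : ℝ) :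
    Tendsto (fun q => tanh (b * √q) ^ 2 / q) (𝓝[>] 0) (𝓝 (b ^ 2)) := by
  have hslope : Tendsto (fun t => t⁻¹ * tanh (b * t)) (𝓝[≠] 0) (𝓝 b) := by
    have h := (hasDerivAt_tanh (b * 0)).comp (0:ℝ) ((hasDerivAt_id (0:ℝ)).const_mul b)
    rw [hasDerivAt_iff_tendsto_slope_zero] at h
    simpa [tanh_zero] using h
  have hsqrt : Tendsto (fun q => √q) (𝓝[>] 0) (𝓝[≠] 0) :=
    tendsto_nhdsWithin_of_tendsto_nhds_of_eventually_within _
      ((continuous_sqrt.tendsto' 0 0 sqrt_zero).mono_left nhdsWithin_le_nhds)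
      (eventually_nhdsWithin_of_forall fun q hq => (sqrt_pos.2 hq).ne')
  refine ((hslope.comp hsqrt).pow 2).congr' ?_
  filter_upwards [self_mem_nhdsWithin] with q hq
  simp [mul_pow, inv_pow, sq_sqrt (le_of_lt hq), div_eq_inv_mul]

end Real

open Real

theorem integrable_mul_const_sq {μ : Measure ℝ} (hμ : Integrable (fun z => z ^ 2) μ) (a : ℝ) :
    Integrable (fun z => (z * a) ^ 2) μ := by
  simpa [mul_pow] using hμ.mul_const (a ^ 2)

/-- The self-consistency map of the theorem is `tanhSqMean (gaussianReal 0 1) |β|`. -/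
noncomputable def tanhSqMean (μ : Measure ℝ) (a q : ℝ) : ℝ :=
  ∫ z, tanh (z * a * √q) ^ 2 ∂μ

namespace tanhSqMean

variable {μ : Measure ℝ}

theorem integrable_integrand [IsFiniteMeasure μ] (a q : ℝ) :
    Integrable (fun z => tanh (z * a * √q) ^ 2) μ :=
  (integrable_const 1).mono' (by fun_prop) (ae_of_all _ fun _ => norm_tanh_sq_le_one _)

theorem continuous [IsFiniteMeasure μ] (a : ℝ) : Continuous (tanhSqMean μ a) :=
  continuous_of_dominated (fun q => (integrable_integrand a q).aestronglyMeasurable)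
    (fun _ => ae_of_all _ fun _ => norm_tanh_sq_le_one _)
    (integrable_const 1) (ae_of_all _ fun z => by fun_prop)

theorem monotone [IsFiniteMeasure μ] (a : ℝ) : Monotone (tanhSqMean μ a) := by
  intro q q' hqq'
  refine integral_mono (integrable_integrand a q) (integrable_integrand a q') fun z => ?_
  refine tanh_sq_le_tanh_sq ?_
  simp only [abs_mul (z * a), abs_of_nonneg (sqrt_nonneg _)]
  gcongr

theorem nonneg (a q : ℝ) : 0 ≤ tanhSqMean μ a q :=
  integral_nonneg fun _ => sq_nonneg _

theorem lt_one [IsProbabilityMeasure μ] (a q : ℝ) : tanhSqMean μ a q < 1 := by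
  have hint := (integrable_const 1).sub (integrable_integrand (μ := μ) a q)
  have hpos : 0 < ∫ z, (1 - tanh (z * a * √q) ^ 2) ∂μ := by
    rw [integral_pos_iff_support_of_nonneg (fun z => sub_nonneg.2 (tanh_sq_lt_one _).le) hint]
    have hsupp : Function.support (fun z => 1 - tanh (z * a * √q) ^ 2) = univ :=
      eq_univ_of_forall fun z => sub_ne_zero.2 (tanh_sq_lt_one _).ne'
    simp [hsupp]
  rw [integral_sub (integrable_const 1) (integrable_integrand a q)] at hpos
  simpa [tanhSqMean] using hpos

@[simp] theorem apply_zero (a : ℝ) : tanhSqMean μ a 0 = 0 := by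
  simp [tanhSqMean]

theorem differentiableAt [IsFiniteMeasure μ] (hμ : Integrable (fun z => z ^ 2) μ) (a : ℝ)
    {q : ℝ} (hq : 0 < q) : DifferentiableAt ℝ (tanhSqMean μ a) q :=
  (hasDerivAt_integral_of_dominated_loc_of_deriv_le (Ioi_mem_nhds hq)
    (F' := fun q z => 2 * tanh (z * a * √q) * (1 - tanh (z * a * √q) ^ 2) * (z * a / (2 * √q)))
    (Eventually.of_forall fun q => (integrable_integrand a q).aestronglyMeasurable)
    (integrable_integrand a q) (by fun_prop)
    (ae_of_all _ fun z q' hq' => abs_deriv_tanh_mul_sqrt_sq_le (z * a) hq')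
    (integrable_mul_const_sq hμ a)
    (ae_of_all _ fun z q' hq' => hasDerivAt_tanh_mul_sqrt_sq (z * a) hq')).2.differentiableAt

theorem tendsto_div (hμ : Integrable (fun z => z ^ 2) μ) (a : ℝ) :
    Tendsto (fun q => tanhSqMean μ a q / q) (𝓝[>] 0) (𝓝 (a ^ 2 * ∫ z, z ^ 2 ∂μ)) := by
  have h := tendsto_integral_filter_of_dominated_convergence (fun z => (z * a) ^ 2)
    (F := fun q z => tanh (z * a * √q) ^ 2 / q)
    (Eventually.of_forall fun q => by fun_prop)
    (eventually_nhdsWithin_of_forall fun q hq => ae_of_all _ fun z => by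
      rw [norm_of_nonneg (div_nonneg (sq_nonneg _) (le_of_lt hq))]
      exact tanh_mul_sqrt_sq_div_le (z * a) hq)
    (integrable_mul_const_sq hμ a)
    (ae_of_all _ fun z => tendsto_tanh_mul_sqrt_sq_div (z * a))
  simp only [integral_div, mul_pow, integral_mul_const] at h
  simpa [tanhSqMean, mul_comm] using h

end tanhSqMean

theorem integral_sq_gaussianReal (m : ℝ) (v : NNReal) :
    ∫ x, x ^ 2 ∂gaussianReal m v = m ^ 2 + v := by
  have h := variance_eq_sub (memLp_id_gaussianReal' (μ := m) (v := v) 2 (by simp))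
  rw [variance_id_gaussianReal] at h
  simp only [Pi.pow_apply, id, integral_id_gaussianReal] at h
  linarith

/-- Basic properties of the SK replica-symmetric self-consistency map
`q ↦ ∫ tanh²(z √(β² q)) dμ(z)` with `μ` the standard Gaussian. -/
theorem sk_self_consistency_map_props (β : ℝ) (f : ℝ → ℝ)
    (hf : f = fun q => ∫ z, (Real.tanh (z * Real.sqrt (β ^ 2 * q))) ^ 2
        ∂(gaussianReal 0 1)) :
    ContinuousOn f (Set.Icc 0 1) ∧ MonotoneOn f (Set.Icc 0 1) ∧
      (∀ q ∈ Set.Icc (0:ℝ) 1, f q ∈ Set.Ico (0:ℝ) 1) ∧ f 0 = 0 ∧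
      (∀ q ∈ Set.Ioc (0:ℝ) 1, DifferentiableAt ℝ f q) ∧
      Tendsto (fun q => f q / q) (nhdsWithin 0 (Set.Ioi 0)) (nhds (β ^ 2)) := by
  have hf' : f = tanhSqMean (gaussianReal 0 1) |β| := by
    funext q
    simp only [hf, tanhSqMean, sqrt_mul (sq_nonneg β), sqrt_sq_eq_abs, mul_assoc]
  have hsq : Integrable (fun z => z ^ 2) (gaussianReal 0 1) :=
    (memLp_id_gaussianReal 2).integrable_sq
  subst hf'
  refine ⟨(tanhSqMean.continuous _).continuousOn, (tanhSqMean.monotone _).monotoneOn _,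
    fun q _ => ⟨tanhSqMean.nonneg _ _, tanhSqMean.lt_one _ _⟩, tanhSqMean.apply_zero _,
    fun q hq => tanhSqMean.differentiableAt hsq _ hq.1, ?_⟩
  simpa [integral_sq_gaussianReal, sq_abs] using tanhSqMean.tendsto_div hsq |β|
end
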